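/- The set of optimal matrix sequences (W^1,...,W^T) of the LP T-GOSPA quasi-metric does not depend on the parameter ρ ∈ (0,1): the objective function of the LP T-GOSPA quasi-metric differs between two values of ρ only by an additive constant independent of (W^1,...,W^T). -/
import Mathlib


open Finset

/-- The `p`-th power of the base-case GOSPA quasi-metric between at-most-one-element
sets: `min(c, db)^p` if both exist, `ρ c^p` if only the second exists, `(1−ρ) c^p`
if only the first exists, `0` if neither exists. -/
noncomputable def pairD {X : Type*} (db : X → X → ℝ) (c p ρ : ℝ) :
    Option X → Option X → ℝ
  | some a, some b => min c (db a b) ^ p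
  | none, some _ => ρ * c ^ p
  | some _, none => (1 - ρ) * c ^ p
  | none, none => 0

/-- Extend a family of `n` at-most-one-element sets with a dummy empty set at
index `n`. -/
def extOpt {X : Type*} {n : ℕ} (xs : Fin n → Option X) : Fin (n + 1) → Option X :=
  fun i => if h : (i : ℕ) < n then xs ⟨i, h⟩ else none

/-- The relaxed assignment polytope: nonnegative entries, unit column sums for
non-dummy columns, unit row sums for non-dummy rows, and zero dummy-dummy entry. -/
def InPolytope {nX nY : ℕ} (W : Fin (nX + 1) → Fin (nY + 1) → ℝ) : Prop :=
  (∀ i j, 0 ≤ W i j) ∧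
  (∀ j : Fin nY, ∑ i, W i j.castSucc = 1) ∧
  (∀ i : Fin nX, ∑ j, W i.castSucc j = 1) ∧
  W (Fin.last nX) (Fin.last nY) = 0

/-- The objective (before the `1/p`-th root) of the LP T-GOSPA quasi-metric, as a
function of the sequence of relaxed assignment matrices `W`. -/
noncomputable def lpObj {X : Type*} (db : X → X → ℝ) (c p γ ρ : ℝ) {T nX nY : ℕ}
    (Xs : Fin nX → Fin T → Option X) (Ys : Fin nY → Fin T → Option X)
    (W : Fin T → Fin (nX + 1) → Fin (nY + 1) → ℝ) : ℝ :=
  (∑ k : Fin T, ∑ i, ∑ j, W k i j *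
      pairD db c p ρ (extOpt (fun i' => Xs i' k) i) (extOpt (fun j' => Ys j' k) j))
    + γ ^ p / 2 * ∑ k : Fin (T - 1), ∑ i : Fin nX, ∑ j : Fin nY,
        |W ⟨k.1, by have := k.isLt; omega⟩ i.castSucc j.castSucc
          - W ⟨k.1 + 1, by have := k.isLt; omega⟩ i.castSucc j.castSucc|

/-- The LP T-GOSPA objective for two values of `ρ` differs only by an additive
constant independent of the sequence of matrices `W`; hence the set of optimal
matrix sequences does not depend on `ρ`. -/
theorem lp_tgospa_objective_rho_indep {X : Type*} (db : X → X → ℝ)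
    (c p γ : ℝ) (hc : 0 < c) (hp : 1 ≤ p) (hγ : 0 < γ) (ρ ρ' : ℝ)
    (hρ : ρ ∈ Set.Ioo (0 : ℝ) 1) (hρ' : ρ' ∈ Set.Ioo (0 : ℝ) 1)
    {T nX nY : ℕ} (Xs : Fin nX → Fin T → Option X) (Ys : Fin nY → Fin T → Option X) :
    ∃ K : ℝ, ∀ W : Fin T → Fin (nX + 1) → Fin (nY + 1) → ℝ,
      (∀ k, InPolytope (W k)) →
      lpObj db c p γ ρ Xs Ys W = lpObj db c p γ ρ' Xs Ys W + K := by
  classical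
  set e : Option X → ℝ := fun o => if o.isSome then 1 else 0 with he
  have hext_cast : ∀ {n : ℕ} (xs : Fin n → Option X) (j : Fin n),
      extOpt xs j.castSucc = xs j := by
    intro n xs j
    simp [extOpt]
  have hext_last : ∀ {n : ℕ} (xs : Fin n → Option X),
      extOpt xs (Fin.last n) = none := by
    intro n xs
    simp [extOpt]
  refine ⟨(ρ - ρ') * c ^ p * ∑ k : Fin T,
      ((∑ j : Fin nY, e (Ys j k)) - ∑ i : Fin nX, e (Xs i k)), ?_⟩
  intro W hW
  unfold lpObj
  rw [add_right_comm]
  congr 1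
  rw [Finset.mul_sum, ← Finset.sum_add_distrib]
  refine Finset.sum_congr rfl fun k _ => ?_
  obtain ⟨hpos, hcol, hrow, hlast⟩ := hW k
  have hpair : ∀ a b : Option X, pairD db c p ρ a b
      = pairD db c p ρ' a b + (ρ - ρ') * c ^ p * (e b - e a) := by
    rintro (_ | a) (_ | b) <;> simp [pairD, he] <;> ring
  have step1 : ∑ i, ∑ j, W k i j *
        pairD db c p ρ (extOpt (fun i' => Xs i' k) i) (extOpt (fun j' => Ys j' k) j)
      = (∑ i, ∑ j, W k i j *
        pairD db c p ρ' (extOpt (fun i' => Xs i' k) i) (extOpt (fun j' => Ys j' k) j))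
        + (ρ - ρ') * c ^ p * ∑ i, ∑ j, W k i j *
          (e (extOpt (fun j' => Ys j' k) j) - e (extOpt (fun i' => Xs i' k) i)) := by
    rw [Finset.mul_sum, ← Finset.sum_add_distrib]
    refine Finset.sum_congr rfl fun i _ => ?_
    rw [Finset.mul_sum, ← Finset.sum_add_distrib]
    refine Finset.sum_congr rfl fun j _ => ?_
    rw [hpair]; ring
  rw [step1]
  congr 1
  congr 1
  -- it remains to show the inner double sum equals ∑ e(Ys) - ∑ e(Xs)
  have hsplit : ∑ i, ∑ j, W k i j *
      (e (extOpt (fun j' => Ys j' k) j) - e (extOpt (fun i' => Xs i' k) i))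
      = (∑ i, ∑ j, W k i j * e (extOpt (fun j' => Ys j' k) j))
        - ∑ i, ∑ j, W k i j * e (extOpt (fun i' => Xs i' k) i) := by
    rw [← Finset.sum_sub_distrib]
    refine Finset.sum_congr rfl fun i _ => ?_
    rw [← Finset.sum_sub_distrib]
    exact Finset.sum_congr rfl fun j _ => by ring
  rw [hsplit]
  have hY : (∑ i, ∑ j, W k i j * e (extOpt (fun j' => Ys j' k) j))
      = ∑ j : Fin nY, e (Ys j k) := by
    rw [Finset.sum_comm]
    rw [Fin.sum_univ_castSucc]
    have hlastY : (∑ i, W k i (Fin.last nY) * e (extOpt (fun j' => Ys j' k) (Fin.last nY))) = 0 := by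
      simp [hext_last, he]
    rw [hlastY, add_zero]
    refine Finset.sum_congr rfl fun j _ => ?_
    rw [hext_cast]
    rw [← Finset.sum_mul, hcol j, one_mul]
  have hX : (∑ i, ∑ j, W k i j * e (extOpt (fun i' => Xs i' k) i))
      = ∑ i : Fin nX, e (Xs i k) := by
    rw [Fin.sum_univ_castSucc]
    have hlastX : (∑ j, W k (Fin.last nX) j * e (extOpt (fun i' => Xs i' k) (Fin.last nX))) = 0 := by
      simp [hext_last, he]
    rw [hlastX, add_zero]
    refine Finset.sum_congr rfl fun i _ => ?_
    rw [hext_cast]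
    rw [← Finset.sum_mul, hrow i, one_mul]
  rw [hY, hX]
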